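/- arXiv:2202.08689 — 5 statements merged into one kernel-verified Lean document; each statement's English description precedes it below -/
import Mathlib

section
/- Let J : ℝⁿ → Matrix (Fin n) (Fin n) ℝ take skew-symmetric values, let R : ℝⁿ → Matrix (Fin n) (Fin n) ℝ, σ : ℝⁿ → Matrix (Fin n) (Fin d) ℝ, g : ℝⁿ → Matrix (Fin n) (Fin m) ℝ, and let H : ℝⁿ → ℝ be twice differentiable. If for every x ∈ ℝⁿ the inequality 2·(∇H(x))ᵀ R(x) ∇H(x) ≥ Tr(∇²H(x) · σ(x)σ(x)ᵀ) holds, then for every x ∈ ℝⁿ and every control value u ∈ ℝᵐ one has L H(x) ≤ y(x)ᵀ u, where L H(x) = ∇H(x) · ((J(x) − R(x))∇H(x) + g(x)u) + (1/2)·Tr(σ(x)σ(x)ᵀ ∇²H(x)) and y(x) = g(x)ᵀ ∇H(x); that is, the stochastic port–Hamiltonian system is passive with storage function H. -/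
open Matrix

/-- **Passivity of a stochastic port–Hamiltonian system.**
If `2 (∇H x)ᵀ R x (∇H x) ≥ Tr(∇²H x · σ x (σ x)ᵀ)` for all `x`, then
`L H x ≤ (y x)ᵀ u` for all states `x` and controls `u`, where
`L H x = ∇H x ⬝ ((J x − R x) ∇H x + g x u) + ½ Tr(σ x (σ x)ᵀ ∇²H x)` and
`y x = (g x)ᵀ ∇H x`. -/
theorem stmt_0 (n d m : ℕ)
    (J R : (Fin n → ℝ) → Matrix (Fin n) (Fin n) ℝ)
    (σ : (Fin n → ℝ) → Matrix (Fin n) (Fin d) ℝ)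
    (g : (Fin n → ℝ) → Matrix (Fin n) (Fin m) ℝ)
    (H : (Fin n → ℝ) → ℝ)
    (hJ : ∀ x, (J x)ᵀ = -(J x))
    (hH : ContDiff ℝ 2 H)
    (gradH : (Fin n → ℝ) → (Fin n → ℝ))
    (hessH : (Fin n → ℝ) → Matrix (Fin n) (Fin n) ℝ)
    (hgrad : ∀ x i, gradH x i = fderiv ℝ H x (Pi.single i 1))
    (hhess : ∀ x i j,
      hessH x i j = fderiv ℝ (fun y => fderiv ℝ H y (Pi.single j 1)) x (Pi.single i 1))
    (hpass : ∀ x,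
      2 * (gradH x ⬝ᵥ (R x).mulVec (gradH x)) ≥
        Matrix.trace (hessH x * (σ x * (σ x)ᵀ))) :
    ∀ (x : Fin n → ℝ) (u : Fin m → ℝ),
      gradH x ⬝ᵥ ((J x - R x).mulVec (gradH x) + (g x).mulVec u) +
          (1 / 2) * Matrix.trace (σ x * (σ x)ᵀ * hessH x) ≤
        ((g x)ᵀ.mulVec (gradH x)) ⬝ᵥ u := by
  intro x u
  have hskew : gradH x ⬝ᵥ (J x).mulVec (gradH x) = 0 := by
    have h1 : gradH x ⬝ᵥ (J x).mulVec (gradH x)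
        = (J x)ᵀ.mulVec (gradH x) ⬝ᵥ gradH x := by
      rw [Matrix.dotProduct_mulVec, ← Matrix.mulVec_transpose]
    rw [hJ x] at h1
    simp [Matrix.neg_mulVec, dotProduct_comm] at h1
    linarith
  have hyg : gradH x ⬝ᵥ (g x).mulVec u = ((g x)ᵀ.mulVec (gradH x)) ⬝ᵥ u := by
    rw [Matrix.dotProduct_mulVec, ← Matrix.mulVec_transpose]
  have htr : Matrix.trace (σ x * (σ x)ᵀ * hessH x)
      = Matrix.trace (hessH x * (σ x * (σ x)ᵀ)) := Matrix.trace_mul_comm _ _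
  have hp := hpass x
  rw [dotProduct_add, Matrix.sub_mulVec, dotProduct_sub, hskew, hyg, htr]
  linarith
end

section
/- Let Λ be a symmetric positive definite n×n real matrix, let J be a skew-symmetric n×n real matrix, let R be a positive semidefinite symmetric n×n real matrix, and let Σ be a positive definite symmetric n×n real matrix (Σ = σσᵀ for an additive, i.e. constant, diffusion coefficient σ). Let H(x) = (1/2)·xᵀΛx. Then there exists ε > 0 such that for every x ∈ ℝⁿ with ‖x‖ < ε the autonomous generator satisfies L₀H(x) = −xᵀΛRΛx + (1/2)·Tr(ΛΣ) > 0. In particular the passivity inequality L₀H(x) ≤ 0 fails on a neighborhood of the origin, so the stochastic port–Hamiltonian system with additive non-degenerate noise and quadratic Hamiltonian is never passive. -/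
/-!
The skew part `J` contributes nothing to the quadratic form, so the drift term is
`-(Λx)ᵀ R (Λx) = -xᵀΛRΛx`, a continuous function vanishing at `0`. The Itô correction
`½ Tr(ΛΣ)` is a strictly positive constant: by the Schur product theorem `Λ ⊙ Σ` is positive
definite, and `Tr(ΛΣ) = 𝟙ᵀ(Λ ⊙ Σᵀ)𝟙`.
-/

open Matrix

open scoped ComplexOrder in
theorem Matrix.PosDef.trace_mul_pos {𝕜 ι : Type*} [RCLike 𝕜] [Fintype ι] [Nonempty ι]
    {A B : Matrix ι ι 𝕜} (hA : A.PosDef) (hB : B.PosDef) : 0 < trace (A * B) := by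
  have h := (hA.hadamard hB.transpose).dotProduct_mulVec_pos (x := 1) one_ne_zero
  simpa [one_dotProduct, mulVec, dotProduct_one, trace, mul_apply] using h

theorem Matrix.mulVec_dotProduct_self_eq_zero_of_transpose_eq_neg {R ι : Type*} [CommRing R]
    [IsAddTorsionFree R] [Fintype ι] {J : Matrix ι ι R} (hJ : Jᵀ = -J) (y : ι → R) :
    (J *ᵥ y) ⬝ᵥ y = 0 := by
  refine self_eq_neg.mp ?_
  calc (J *ᵥ y) ⬝ᵥ y = (Jᵀ *ᵥ y) ⬝ᵥ y := by
        rw [mulVec_transpose, ← dotProduct_mulVec, dotProduct_comm]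
    _ = -((J *ᵥ y) ⬝ᵥ y) := by rw [hJ, neg_mulVec, neg_dotProduct]

theorem Matrix.sub_mulVec_dotProduct_eq_neg_dotProduct_mul_mul_mulVec {R ι : Type*}
    [CommRing R] [IsAddTorsionFree R] [Fintype ι] {Λ J : Matrix ι ι R} (hΛ : Λ.IsSymm)
    (hJ : Jᵀ = -J) (D : Matrix ι ι R) (x : ι → R) :
    ((J - D) *ᵥ (Λ *ᵥ x)) ⬝ᵥ (Λ *ᵥ x) = -(x ⬝ᵥ (Λ * D * Λ) *ᵥ x) := by
  rw [sub_mulVec, sub_dotProduct, mulVec_dotProduct_self_eq_zero_of_transpose_eq_neg hJ,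
    zero_sub, ← mulVec_mulVec, ← mulVec_mulVec, dotProduct_mulVec x Λ, ← mulVec_transpose,
    hΛ.eq, dotProduct_comm]

theorem Matrix.exists_pos_forall_norm_lt_dotProduct_mulVec_lt {ι : Type*} [Fintype ι]
    (M : Matrix ι ι ℝ) {c : ℝ} (hc : 0 < c) :
    ∃ ε > (0 : ℝ), ∀ x : ι → ℝ, ‖x‖ < ε → x ⬝ᵥ M *ᵥ x < c := by
  have hq : Filter.Tendsto (fun x : ι → ℝ => x ⬝ᵥ M *ᵥ x) (nhds 0) (nhds 0) := by
    simpa using (show Continuous fun x : ι → ℝ => x ⬝ᵥ M *ᵥ x by fun_prop).tendsto 0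
  obtain ⟨ε, hε, h⟩ := Metric.eventually_nhds_iff.mp (hq.eventually_lt_const hc)
  exact ⟨ε, hε, fun x hx => h (by rwa [dist_zero_right])⟩

theorem stmt_1_general (n : ℕ) (hn : 0 < n)
    (Λ J R Sig : Matrix (Fin n) (Fin n) ℝ)
    (hΛ : Λ.PosDef) (hΛsymm : Λ.IsSymm)
    (hJ : Jᵀ = -J)
    (hSig : Sig.PosDef) :
    ∃ ε > (0 : ℝ), ∀ x : Fin n → ℝ, ‖x‖ < ε →
      ((J - R).mulVec (Λ.mulVec x)) ⬝ᵥ (Λ.mulVec x) + (1 / 2) * Matrix.trace (Sig * Λ) =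
          -(x ⬝ᵥ (Λ * R * Λ).mulVec x) + (1 / 2) * Matrix.trace (Λ * Sig) ∧
        0 < ((J - R).mulVec (Λ.mulVec x)) ⬝ᵥ (Λ.mulVec x) +
          (1 / 2) * Matrix.trace (Sig * Λ) := by
  have : Nonempty (Fin n) := ⟨⟨0, hn⟩⟩
  have hc : 0 < (1 / 2) * trace (Λ * Sig) := by positivity [hΛ.trace_mul_pos hSig]
  obtain ⟨ε, hε, hsmall⟩ := exists_pos_forall_norm_lt_dotProduct_mulVec_lt (Λ * R * Λ) hc
  refine ⟨ε, hε, fun x hx => ?_⟩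
  rw [sub_mulVec_dotProduct_eq_neg_dotProduct_mul_mul_mulVec hΛsymm hJ, trace_mul_comm Sig Λ]
  exact ⟨rfl, by linarith [hsmall x hx]⟩

/-- **A SPHS with additive non-degenerate noise and quadratic Hamiltonian is never passive.**
With `H x = ½ xᵀ Λ x`, there is `ε > 0` such that for all `‖x‖ < ε` the autonomous
generator satisfies `L₀H x = −xᵀΛRΛx + ½ Tr(ΛΣ) > 0`, so the passivity inequality
`L₀H x ≤ 0` fails in a neighborhood of the origin. -/
theorem stmt_1 (n : ℕ) (hn : 0 < n)
    (Λ J R Sig : Matrix (Fin n) (Fin n) ℝ)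
    (hΛ : Λ.PosDef) (hΛsymm : Λ.IsSymm)
    (hJ : Jᵀ = -J)
    (hR : R.PosSemidef) (hRsymm : R.IsSymm)
    (hSig : Sig.PosDef) (hSigsymm : Sig.IsSymm)
    (H : (Fin n → ℝ) → ℝ)
    (hH : ∀ x, H x = (1 / 2) * (x ⬝ᵥ Λ.mulVec x)) :
    ∃ ε > (0 : ℝ), ∀ x : Fin n → ℝ, ‖x‖ < ε →
      ((J - R).mulVec (Λ.mulVec x)) ⬝ᵥ (Λ.mulVec x) + (1 / 2) * Matrix.trace (Sig * Λ) =
          -(x ⬝ᵥ (Λ * R * Λ).mulVec x) + (1 / 2) * Matrix.trace (Λ * Sig) ∧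
        0 < ((J - R).mulVec (Λ.mulVec x)) ⬝ᵥ (Λ.mulVec x) +
          (1 / 2) * Matrix.trace (Sig * Λ) :=
  stmt_1_general n hn Λ J R Sig hΛ hΛsymm hJ hSig
end

section
/- Let Λ be a symmetric positive definite n×n real matrix, J a skew-symmetric n×n real matrix, R a symmetric positive definite n×n real matrix, Σ a positive semidefinite symmetric n×n real matrix, and g : ℝⁿ → Matrix (Fin n) (Fin m) ℝ. Let H(x) = (1/2)·xᵀΛx and y(x) = g(x)ᵀΛx. Then there exist constants C > 0 and δ > 0 such that for every x ∈ ℝⁿ with ‖x‖ ≥ C and every u ∈ ℝᵐ, the generator L H(x) = ((J−R)Λx + g(x)u)·(Λx) + (1/2)·Tr(ΣΛ) satisfies L H(x) ≤ y(x)ᵀu − δ‖x‖². That is, the stochastic port–Hamiltonian system with additive noise and quadratic Hamiltonian is always strictly ultimately stochastic passive. -/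
/-!
Put `v = Λx`. Skew-symmetry of `J` kills `(Jv)·v` and `(g u)·v = (gᵀv)·u = y·u`, so the
generator equals `y·u − vᵀRv + ½ Tr(ΣΛ)`. Since `ΛᵀRΛ` is positive definite, compactness of the
unit sphere gives `vᵀRv ≥ c‖x‖²`; for `‖x‖` large, `c‖x‖² ≥ Tr(ΣΛ)` absorbs the constant noise
term and leaves `−(c/2)‖x‖²`.
-/

open Matrix Filter

namespace Matrix

variable {ι : Type*} [Fintype ι]

theorem dotProduct_mulVec_self_eq_zero_of_transpose_eq_neg {α : Type*} [CommRing α]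
    [NoZeroDivisors α] [CharZero α] {J : Matrix ι ι α} (hJ : Jᵀ = -J) (v : ι → α) :
    v ⬝ᵥ J *ᵥ v = 0 := by
  refine CharZero.eq_neg_self_iff.mp ?_
  calc v ⬝ᵥ J *ᵥ v = Jᵀ *ᵥ v ⬝ᵥ v := by rw [dotProduct_mulVec, mulVec_transpose]
    _ = -(v ⬝ᵥ J *ᵥ v) := by rw [hJ, neg_mulVec, neg_dotProduct, dotProduct_comm]

theorem sub_mulVec_add_mulVec_dotProduct_of_transpose_eq_neg {κ α : Type*} [Fintype κ]
    [CommRing α] [NoZeroDivisors α] [CharZero α] {J : Matrix ι ι α} (hJ : Jᵀ = -J)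
    (R : Matrix ι ι α) (G : Matrix ι κ α) (v : ι → α) (u : κ → α) :
    ((J - R) *ᵥ v + G *ᵥ u) ⬝ᵥ v = Gᵀ *ᵥ v ⬝ᵥ u - v ⬝ᵥ R *ᵥ v := by
  have hG : G *ᵥ u ⬝ᵥ v = Gᵀ *ᵥ v ⬝ᵥ u := by
    rw [dotProduct_comm, dotProduct_mulVec, mulVec_transpose]
  rw [add_dotProduct, sub_mulVec, sub_dotProduct, hG, dotProduct_comm (J *ᵥ v),
    dotProduct_mulVec_self_eq_zero_of_transpose_eq_neg hJ, dotProduct_comm (R *ᵥ v)]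
  ring

theorem PosDef.exists_pos_mul_norm_sq_le {M : Matrix ι ι ℝ} (hM : M.PosDef) :
    ∃ c > (0 : ℝ), ∀ x : ι → ℝ, c * ‖x‖ ^ 2 ≤ x ⬝ᵥ M *ᵥ x := by
  rcases subsingleton_or_nontrivial (ι → ℝ) with hι | hι
  · exact ⟨1, one_pos, fun x => by simp [Subsingleton.elim x 0]⟩
  have hq : Continuous fun x : ι → ℝ => x ⬝ᵥ M *ᵥ x := by fun_prop
  obtain ⟨w₀, hw₀, hmin⟩ := (isCompact_sphere (0 : ι → ℝ) 1).exists_isMinOn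
    (NormedSpace.sphere_nonempty.mpr zero_le_one) hq.continuousOn
  have hw₀ne : w₀ ≠ 0 := ne_zero_of_mem_unit_sphere ⟨w₀, hw₀⟩
  refine ⟨w₀ ⬝ᵥ M *ᵥ w₀, by simpa using hM.dotProduct_mulVec_pos hw₀ne, fun x => ?_⟩
  rcases eq_or_ne x 0 with rfl | hx
  · simp
  set w := ‖x‖⁻¹ • x
  have hw : w ∈ Metric.sphere (0 : ι → ℝ) 1 := by
    simp [w, norm_smul, inv_mul_cancel₀ (norm_ne_zero_iff.mpr hx)]
  have hxw : x = ‖x‖ • w := by simp [w, smul_smul, mul_inv_cancel₀ (norm_ne_zero_iff.mpr hx)]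
  calc (w₀ ⬝ᵥ M *ᵥ w₀) * ‖x‖ ^ 2 ≤ (w ⬝ᵥ M *ᵥ w) * ‖x‖ ^ 2 := by gcongr; exact hmin hw
    _ = x ⬝ᵥ M *ᵥ x := by
      conv_rhs => rw [hxw]
      simp only [mulVec_smul, dotProduct_smul, smul_dotProduct, smul_eq_mul]
      ring

theorem PosDef.exists_pos_mul_norm_sq_le_dotProduct_mulVec_mulVec {κ : Type*} [Fintype κ]
    {R : Matrix ι ι ℝ} (hR : R.PosDef) {B : Matrix ι κ ℝ} (hB : Function.Injective B.mulVec) :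
    ∃ c > (0 : ℝ), ∀ x : κ → ℝ, c * ‖x‖ ^ 2 ≤ B *ᵥ x ⬝ᵥ R *ᵥ (B *ᵥ x) := by
  obtain ⟨c, hc, hcoer⟩ := (hR.conjTranspose_mul_mul_same hB).exists_pos_mul_norm_sq_le
  refine ⟨c, hc, fun x => (hcoer x).trans_eq ?_⟩
  rw [← mulVec_mulVec, ← mulVec_mulVec, dotProduct_mulVec, conjTranspose_eq_transpose_of_trivial,
    vecMul_transpose]

end Matrix

theorem stmt_2_general (n m : ℕ)
    (Λ J R Sig : Matrix (Fin n) (Fin n) ℝ)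
    (hΛ : Λ.PosDef)
    (hJ : Jᵀ = -J)
    (hR : R.PosDef)
    (g : (Fin n → ℝ) → Matrix (Fin n) (Fin m) ℝ)
    (y : (Fin n → ℝ) → (Fin m → ℝ))
    (hy : ∀ x, y x = (g x)ᵀ.mulVec (Λ.mulVec x)) :
    ∃ C > (0 : ℝ), ∃ δ > (0 : ℝ), ∀ (x : Fin n → ℝ) (u : Fin m → ℝ), ‖x‖ ≥ C →
      ((J - R).mulVec (Λ.mulVec x) + (g x).mulVec u) ⬝ᵥ (Λ.mulVec x) +
          (1 / 2) * Matrix.trace (Sig * Λ) ≤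
        y x ⬝ᵥ u - δ * ‖x‖ ^ 2 := by
  obtain ⟨c, hc, hdiss⟩ := hR.exists_pos_mul_norm_sq_le_dotProduct_mulVec_mulVec
    (mulVec_injective_iff_isUnit.mpr hΛ.isUnit)
  obtain ⟨C, hC⟩ := eventually_atTop.mp
    (((tendsto_pow_atTop two_ne_zero).const_mul_atTop hc).eventually_ge_atTop (trace (Sig * Λ)))
  refine ⟨max C 1, by positivity, c / 2, half_pos hc, fun x u hx => ?_⟩
  rw [sub_mulVec_add_mulVec_dotProduct_of_transpose_eq_neg hJ, ← hy]
  have hnoise := hC ‖x‖ (le_of_max_le_left hx)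
  linarith [hdiss x]

/-- **A SPHS with additive noise and quadratic Hamiltonian is always strictly ultimately
stochastic passive.** With `H x = ½ xᵀ Λ x` and output `y x = (g x)ᵀ Λ x`, there are
`C > 0` and `δ > 0` such that for every `x` with `‖x‖ ≥ C` and every control `u`,
`L H x = ((J−R)Λx + g(x)u)·(Λx) + ½ Tr(ΣΛ) ≤ (y x)ᵀ u − δ ‖x‖²`. -/
theorem stmt_2 (n m : ℕ)
    (Λ J R Sig : Matrix (Fin n) (Fin n) ℝ)
    (hΛ : Λ.PosDef) (hΛsymm : Λ.IsSymm)
    (hJ : Jᵀ = -J)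
    (hR : R.PosDef) (hRsymm : R.IsSymm)
    (hSig : Sig.PosSemidef) (hSigsymm : Sig.IsSymm)
    (g : (Fin n → ℝ) → Matrix (Fin n) (Fin m) ℝ)
    (H : (Fin n → ℝ) → ℝ)
    (hH : ∀ x, H x = (1 / 2) * (x ⬝ᵥ Λ.mulVec x))
    (y : (Fin n → ℝ) → (Fin m → ℝ))
    (hy : ∀ x, y x = (g x)ᵀ.mulVec (Λ.mulVec x)) :
    ∃ C > (0 : ℝ), ∃ δ > (0 : ℝ), ∀ (x : Fin n → ℝ) (u : Fin m → ℝ), ‖x‖ ≥ C →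
      ((J - R).mulVec (Λ.mulVec x) + (g x).mulVec u) ⬝ᵥ (Λ.mulVec x) +
          (1 / 2) * Matrix.trace (Sig * Λ) ≤
        y x ⬝ᵥ u - δ * ‖x‖ ^ 2 :=
  stmt_2_general n m Λ J R Sig hΛ hJ hR g y hy
end

section
/- Let A be an n×n real matrix, B an n×m real matrix, and t > 0. Then the controllability Gramian W(t) = ∫₀ᵗ exp(sA)·B·Bᵀ·exp(sAᵀ) ds (a symmetric positive semidefinite n×n matrix, where exp is the matrix exponential) is positive definite if and only if the pair (A,B) is controllable, i.e. the columns of the block matrix [B, AB, A²B, …, A^{n−1}B] span ℝⁿ. -/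
/-!
Writing `g_x(s) = xᵀ exp(sA) B`, the quadratic form of the Gramian is
`xᵀ W(t) x = ∫₀ᵗ ‖g_x(s)‖² ds`, so `W(t)` fails to be positive definite exactly when some
`x ≠ 0` has `g_x ≡ 0` on `[0, t]`.

If `(A, B)` is not controllable, some `x ≠ 0` is orthogonal to every `AᵏB` with `k < n`; by
Cayley–Hamilton every power of `A`, hence every `exp(sA)`, lies in the span of these `Aᵏ`,
so `g_x ≡ 0`. Conversely, if `g_x` vanishes on an open interval, differentiating `k` times gives
`xᵀ exp(sA) Aᵏ B = 0` there; at any such `s` the vector `y = exp(sA)ᵀ x` is orthogonal to all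
columns of `[B, AB, …, A^{n−1}B]`, and it is nonzero when `x` is, since `exp(sA)` is invertible.
-/

open Matrix NormedSpace

/-- The controllability Gramian `W(t) = ∫₀ᵗ exp(sA) B Bᵀ exp(sAᵀ) ds`, defined entrywise. -/
noncomputable def gramian (n m : ℕ) (A : Matrix (Fin n) (Fin n) ℝ)
    (B : Matrix (Fin n) (Fin m) ℝ) (t : ℝ) : Matrix (Fin n) (Fin n) ℝ :=
  Matrix.of fun i j =>
    ∫ s in (0 : ℝ)..t,
      (NormedSpace.exp (s • A) * B * Bᵀ * NormedSpace.exp (s • Aᵀ)) i j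

/-- The pair `(A, B)` is controllable: the columns of `[B, AB, …, A^{n−1}B]` span `ℝⁿ`. -/
def IsControllable (n m : ℕ) (A : Matrix (Fin n) (Fin n) ℝ)
    (B : Matrix (Fin n) (Fin m) ℝ) : Prop :=
  Submodule.span ℝ
    (Set.range fun kj : Fin n × Fin m => fun i => (A ^ (kj.1 : ℕ) * B) i kj.2) = ⊤

open Polynomial Set

theorem span_range_eq_top_iff_forall_dotProduct {K ι κ : Type*} [Field K] [Fintype ι]
    [DecidableEq ι] (v : κ → ι → K) :
    Submodule.span K (range v) = ⊤ ↔ ∀ x : ι → K, (∀ j, x ⬝ᵥ v j = 0) → x = 0 := by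
  rw [← Submodule.dualAnnihilator_eq_bot_iff, Submodule.eq_bot_iff,
    ← (dotProductEquiv K ι).forall_congr_right]
  refine forall_congr' fun x => imp_congr ?_ (dotProductEquiv K ι).map_eq_zero_iff
  rw [← SetLike.mem_coe, Submodule.coe_dualAnnihilator_span]
  exact range_subset_iff

theorem Matrix.adjoin_le_span_pow {R : Type*} [CommRing R] [Nontrivial R] {n : ℕ}
    (A : Matrix (Fin n) (Fin n) R) :
    Subalgebra.toSubmodule (Algebra.adjoin R {A}) ≤
      Submodule.span R (range fun i : Fin n => A ^ (i : ℕ)) := by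
  rw [Algebra.adjoin_singleton_eq_range_aeval]
  rintro _ ⟨p, rfl⟩
  change aeval A p ∈ _
  rw [aeval_eq_aeval_mod_charpoly]
  rcases eq_or_ne (p %ₘ A.charpoly) 0 with h | h
  · simp [h]
  have hdeg : (p %ₘ A.charpoly).natDegree < n := by
    simpa using natDegree_lt_natDegree h (degree_modByMonic_lt p A.charpoly_monic)
  rw [aeval_eq_sum_range' hdeg, ← Fin.sum_univ_eq_sum_range (fun i => _ • A ^ i)]
  exact Submodule.sum_mem _ fun i _ => Submodule.smul_mem _ _ (Submodule.subset_span ⟨i, rfl⟩)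

theorem Matrix.exp_smul_mem_span_pow {n : ℕ} (A : Matrix (Fin n) (Fin n) ℝ) (s : ℝ) :
    exp (s • A) ∈ Submodule.span ℝ (range fun i : Fin n => A ^ (i : ℕ)) :=
  adjoin_le_span_pow A <| exp_mem (s := Algebra.adjoin ℝ {A})
    (Subalgebra.toSubmodule (Algebra.adjoin ℝ {A})).closed_of_finiteDimensional
    (Subalgebra.smul_mem _ (Algebra.self_mem_adjoin_singleton ℝ A) s)

section BanachAlgebra

variable {𝔸 E : Type*} [NormedRing 𝔸] [NormedAlgebra ℝ 𝔸] [CompleteSpace 𝔸]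
  [NormedAddCommGroup E] [NormedSpace ℝ E]

theorem eqOn_zero_apply_exp_smul_mul (L : 𝔸 →L[ℝ] E) (a : 𝔸) {U : Set ℝ} (hU : IsOpen U)
    (h : EqOn (fun s => L (exp (s • a))) 0 U) :
    EqOn (fun s => L (exp (s • a) * a)) 0 U := fun s hs =>
  (L.hasFDerivAt.comp_hasDerivAt s (hasDerivAt_exp_smul_const a s)).unique
    ((hasDerivAt_const s 0).congr_of_eventuallyEq (h.eventuallyEq_of_mem (hU.mem_nhds hs)))

theorem eqOn_zero_apply_exp_smul_mul_pow (L : 𝔸 →L[ℝ] E) (a : 𝔸) {U : Set ℝ} (hU : IsOpen U)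
    (h : EqOn (fun s => L (exp (s • a))) 0 U) (k : ℕ) :
    EqOn (fun s => L (exp (s • a) * a ^ k)) 0 U := by
  induction k with
  | zero => simpa using h
  | succ k ih =>
    simpa [pow_succ', ← mul_assoc] using
      eqOn_zero_apply_exp_smul_mul (L ∘L (ContinuousLinearMap.mul ℝ 𝔸).flip (a ^ k)) a hU ih

end BanachAlgebra

theorem Matrix.continuous_exp_smul {ι : Type*} [Fintype ι] [DecidableEq ι]
    (A : Matrix ι ι ℝ) : Continuous fun s : ℝ => exp (s • A) := by
  let := Matrix.linftyOpNormedRing (n := ι) (α := ℝ)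
  let := Matrix.linftyOpNormedAlgebra (n := ι) (R := ℝ) (α := ℝ)
  exact continuous_iff_continuousAt.2 fun s => (hasDerivAt_exp_smul_const A s).continuousAt

theorem Matrix.dotProduct_of_intervalIntegral_mulVec {ι : Type*} [Fintype ι] {a b : ℝ}
    (F : ℝ → Matrix ι ι ℝ)
    (hF : ∀ i j, IntervalIntegrable (fun s => F s i j) MeasureTheory.volume a b) (x y : ι → ℝ) :
    x ⬝ᵥ (of fun i j => ∫ s in a..b, F s i j) *ᵥ y = ∫ s in a..b, x ⬝ᵥ F s *ᵥ y := by
  have hF' (i j) : IntervalIntegrable (fun s => x i * (F s i j * y j)) MeasureTheory.volume a b :=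
    ((hF i j).mul_const _).const_mul _
  simp only [dotProduct, mulVec, of_apply, Finset.mul_sum, ← intervalIntegral.integral_mul_const,
    ← intervalIntegral.integral_const_mul]
  rw [intervalIntegral.integral_finsetSum fun i _ => by
    simpa only [← Finset.sum_fn] using IntervalIntegrable.sum Finset.univ fun j _ => hF' i j]
  simp_rw [intervalIntegral.integral_finsetSum fun j _ => hF' _ j]

section Gramian

variable {n m : ℕ} (A : Matrix (Fin n) (Fin n) ℝ) (B : Matrix (Fin n) (Fin m) ℝ)

theorem exp_smul_mul_mul_exp_smul_transpose (s : ℝ) :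
    exp (s • A) * B * Bᵀ * exp (s • Aᵀ) = (exp (s • A) * B) * (exp (s • A) * B)ᵀ := by
  rw [← transpose_smul, exp_transpose, transpose_mul, ← Matrix.mul_assoc]

theorem isHermitian_gramian (t : ℝ) : (gramian n m A B t).IsHermitian := by
  ext i j
  simp only [conjTranspose_apply, star_trivial, gramian, of_apply,
    exp_smul_mul_mul_exp_smul_transpose]
  congr! 2 with s
  simpa using (isHermitian_mul_conjTranspose_self (exp (s • A) * B)).apply i j

theorem dotProduct_gramian_mulVec (t : ℝ) (x : Fin n → ℝ) :
    x ⬝ᵥ gramian n m A B t *ᵥ x =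
      ∫ s in (0 : ℝ)..t, (x ᵥ* exp (s • A) ᵥ* B) ⬝ᵥ (x ᵥ* exp (s • A) ᵥ* B) := by
  rw [gramian, dotProduct_of_intervalIntegral_mulVec]
  · congr! 2 with s
    rw [exp_smul_mul_mul_exp_smul_transpose, dotProduct_mulVec, ← vecMul_vecMul,
      ← dotProduct_mulVec, mulVec_transpose, vecMul_vecMul]
  · exact fun i j => (((((continuous_exp_smul A).matrix_mul continuous_const).matrix_mul
      continuous_const).matrix_mul (continuous_exp_smul Aᵀ)).matrix_elem i j).intervalIntegrable _ _

theorem isControllable_iff_forall_vecMul :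
    IsControllable n m A B ↔
      ∀ x : Fin n → ℝ, (∀ k : Fin n, x ᵥ* (A ^ (k : ℕ) * B) = 0) → x = 0 := by
  rw [IsControllable, span_range_eq_top_iff_forall_dotProduct]
  simp only [Prod.forall, funext_iff]
  rfl

theorem exists_vecMul_exp_smul_vecMul_eq_zero_of_not_isControllable
    (h : ¬ IsControllable n m A B) :
    ∃ x ≠ 0, ∀ s : ℝ, x ᵥ* exp (s • A) ᵥ* B = 0 := by
  obtain ⟨x, hx, hx0⟩ : ∃ x : Fin n → ℝ, (∀ k : Fin n, x ᵥ* (A ^ (k : ℕ) * B) = 0) ∧ x ≠ 0 := by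
    simpa [isControllable_iff_forall_vecMul] using h
  let L : Matrix (Fin n) (Fin n) ℝ →ₗ[ℝ] Fin m → ℝ := B.vecMulLinear ∘ₗ vecMulBilin ℝ ℝ x
  have hL : Submodule.span ℝ (range fun k : Fin n => A ^ (k : ℕ)) ≤ LinearMap.ker L :=
    Submodule.span_le.2 <| range_subset_iff.2 fun k => by simpa [L, vecMul_vecMul] using hx k
  exact ⟨x, hx0, fun s => hL (exp_smul_mem_span_pow A s)⟩

theorem IsControllable.eq_zero_of_eqOn_vecMul_exp_smul_vecMul (hc : IsControllable n m A B)
    {x : Fin n → ℝ} {U : Set ℝ} (hU : IsOpen U) (hne : U.Nonempty)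
    (h : EqOn (fun s => x ᵥ* exp (s • A) ᵥ* B) 0 U) : x = 0 := by
  let := Matrix.linftyOpNormedRing (n := Fin n) (α := ℝ)
  let := Matrix.linftyOpNormedAlgebra (n := Fin n) (R := ℝ) (α := ℝ)
  obtain ⟨s, hs⟩ := hne
  let L := (B.vecMulLinear ∘ₗ vecMulBilin ℝ ℝ x).toContinuousLinearMap
  have hL (k : ℕ) : x ᵥ* (exp (s • A) * A ^ k) ᵥ* B = 0 :=
    eqOn_zero_apply_exp_smul_mul_pow L A hU h k hs
  have hy : x ᵥ* exp (s • A) = 0 :=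
    (isControllable_iff_forall_vecMul A B).1 hc _ fun k => by
      simpa [vecMul_vecMul, Matrix.mul_assoc] using hL k
  exact (vecMul_injective_iff_isUnit.2 (isUnit_exp (s • A))).eq_iff' (zero_vecMul _) |>.1 hy

end Gramian

/-- **Positive definiteness of the controllability Gramian.** For `t > 0`, the Gramian
`W(t) = ∫₀ᵗ exp(sA) B Bᵀ exp(sAᵀ) ds` is positive definite if and only if the pair
`(A, B)` is controllable. -/
theorem stmt_5 (n m : ℕ) (A : Matrix (Fin n) (Fin n) ℝ)
    (B : Matrix (Fin n) (Fin m) ℝ) (t : ℝ) (ht : 0 < t) :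
    (gramian n m A B t).PosDef ↔ IsControllable n m A B := by
  constructor
  · intro hW
    by_contra hc
    obtain ⟨x, hx0, hx⟩ :=
      exists_vecMul_exp_smul_vecMul_eq_zero_of_not_isControllable A B hc
    simpa [dotProduct_gramian_mulVec, hx] using hW.dotProduct_mulVec_pos hx0
  · intro hc
    refine .of_dotProduct_mulVec_pos (isHermitian_gramian A B t) fun x hx => ?_
    have hg : Continuous fun s : ℝ => x ᵥ* exp (s • A) ᵥ* B :=
      (continuous_const.matrix_vecMul (continuous_exp_smul A)).matrix_vecMul continuous_const
    have hnn (v : Fin m → ℝ) : 0 ≤ v ⬝ᵥ v := Finset.sum_nonneg fun i _ => mul_self_nonneg (v i)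
    rw [star_trivial, dotProduct_gramian_mulVec]
    refine intervalIntegral.integral_pos ht (hg.dotProduct hg).continuousOn (fun s _ => hnn _) ?_
    by_contra! hle
    exact hx <| hc.eq_zero_of_eqOn_vecMul_exp_smul_vecMul A B isOpen_Ioo (nonempty_Ioo.2 ht)
      fun s hs => dotProduct_self_eq_zero.1 <| (hle s (Ioo_subset_Icc_self hs)).antisymm (hnn _)
end

section
/- Let σ ≠ 0 be a real number, let A be the 2×2 real matrix with rows (0,1) and (0,0), and let B = (0,σ)ᵀ ∈ ℝ². Then for every t > 0 the matrix ∫₀ᵗ exp(sA)·B·Bᵀ·exp(sAᵀ) ds is symmetric positive definite. Consequently the Gaussian transition law of the stochastic oscillator dq = p dt, dp = σ dW̃, which has this matrix as covariance, is equivalent to the Lebesgue measure on ℝ² for every t > 0. -/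
/-!
Since `A² = 0`, `exp (sA) = 1 + sA`, so `exp (sA) B = (sσ, σ)ᵀ` and the integrand is the rank-one
matrix `σ² [s², s; s, 1]`. Integrating gives `σ² [t³/3, t²/2; t²/2, t]`, whose top-left entry
and determinant `σ⁴t⁴/12` are positive.
-/

open Matrix NormedSpace

open Finset Nat in
theorem NormedSpace.exp_eq_sum_range_of_pow_eq_zero {𝔸 : Type*} [Ring 𝔸] [Algebra ℚ 𝔸]
    [TopologicalSpace 𝔸] [IsTopologicalRing 𝔸] [T2Space 𝔸] {a : 𝔸} {k : ℕ} (h : a ^ k = 0) :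
    exp a = ∑ n ∈ range k, (n !⁻¹ : ℚ) • a ^ n := by
  rw [exp_eq_tsum_rat]
  refine tsum_eq_sum fun n hn => ?_
  rw [pow_eq_zero_of_le (by simpa using hn) h, smul_zero]

theorem exp_smul_nilpotent_fin_two (s : ℝ) :
    exp (s • !![(0 : ℝ), 1; 0, 0]) = !![1, s; 0, 1] := by
  have hsq : (s • !![(0 : ℝ), 1; 0, 0]) ^ 2 = 0 := by
    ext i j; fin_cases i <;> fin_cases j <;> simp [sq]
  rw [exp_eq_sum_range_of_pow_eq_zero hsq]
  ext i j; fin_cases i <;> fin_cases j <;> simp [Finset.sum_range_succ]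

theorem mul_transpose_self_fin_two_one (a b : ℝ) :
    !![a; b] * !![a; b]ᵀ = !![a ^ 2, a * b; a * b, b ^ 2] := by
  ext i j; fin_cases i <;> fin_cases j <;> simp [mul_apply, sq, mul_comm]

theorem posDef_fin_two_of_pos_of_sq_lt {a b d : ℝ} (ha : 0 < a) (hdet : b ^ 2 < a * d) :
    !![a, b; b, d].PosDef := by
  rw [posDef_iff_dotProduct_mulVec]
  refine ⟨?_, fun x hx => ?_⟩
  · ext i j; fin_cases i <;> fin_cases j <;> rfl
  simp only [dotProduct, mulVec, Fin.sum_univ_two, star_trivial, of_apply, cons_val',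
    cons_val_zero, cons_val_one, empty_val', cons_val_fin_one]
  by_cases h1 : x 1 = 0
  · have h0 : x 0 ≠ 0 := fun h0 => hx (funext fun i => by fin_cases i <;> simp [h0, h1])
    simp only [h1]
    nlinarith [sq_pos_of_ne_zero h0]
  · -- a (a x² + 2bxy + dy²) = (ax + by)² + (ad - b²) y²
    have hQ : 0 < a * (x 0 * (a * x 0 + b * x 1) + x 1 * (b * x 0 + d * x 1)) := by
      nlinarith [sq_nonneg (a * x 0 + b * x 1), sq_pos_of_ne_zero h1]
    exact pos_of_mul_pos_right hQ ha.le

theorem oscillator_integrand_eq (σ s : ℝ) :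
    exp (s • !![(0 : ℝ), 1; 0, 0]) * !![0; σ] * !![0; σ]ᵀ * exp (s • !![(0 : ℝ), 1; 0, 0]ᵀ)
      = !![σ ^ 2 * s ^ 2, σ ^ 2 * s; σ ^ 2 * s, σ ^ 2] := by
  have hcol : exp (s • !![(0 : ℝ), 1; 0, 0]) * !![0; σ] = !![s * σ; σ] := by
    rw [exp_smul_nilpotent_fin_two]
    ext i j; fin_cases i <;> fin_cases j <;> simp [mul_apply, Fin.sum_univ_two]
  rw [← transpose_smul, exp_transpose, Matrix.mul_assoc _ !![0; σ]ᵀ, ← transpose_mul, hcol,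
    mul_transpose_self_fin_two_one]
  ext i j; fin_cases i <;> fin_cases j <;> simp <;> ring

theorem of_intervalIntegral_oscillator_integrand (σ t : ℝ) :
    (of fun i j => ∫ s in (0 : ℝ)..t, !![σ ^ 2 * s ^ 2, σ ^ 2 * s; σ ^ 2 * s, σ ^ 2] i j)
      = !![σ ^ 2 * t ^ 3 / 3, σ ^ 2 * t ^ 2 / 2; σ ^ 2 * t ^ 2 / 2, σ ^ 2 * t] := by
  have hlin : ∫ s in (0 : ℝ)..t, σ ^ 2 * s = σ ^ 2 * t ^ 2 / 2 := by
    rw [intervalIntegral.integral_const_mul, integral_id]; ring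
  ext i j
  fin_cases i <;> fin_cases j <;> simp [hlin] <;> ring

/-- **Non-degeneracy of the covariance of the stochastic oscillator.** For `σ ≠ 0`,
`A = !![0,1; 0,0]` and `B = !![0; σ]`, the covariance matrix
`∫₀ᵗ exp(sA) B Bᵀ exp(sAᵀ) ds` of the stochastic oscillator `dq = p dt, dp = σ dW̃`
is symmetric positive definite for every `t > 0`; hence its Gaussian transition law is
equivalent to Lebesgue measure on `ℝ²`. -/
theorem stmt_6 (σ : ℝ) (hσ : σ ≠ 0)
    (A : Matrix (Fin 2) (Fin 2) ℝ) (hA : A = !![0, 1; 0, 0])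
    (B : Matrix (Fin 2) (Fin 1) ℝ) (hB : B = !![0; σ]) :
    ∀ t : ℝ, 0 < t →
      (Matrix.of fun i j =>
        ∫ s in (0 : ℝ)..t,
          (NormedSpace.exp (s • A) * B * Bᵀ * NormedSpace.exp (s • Aᵀ)) i j).PosDef := by
  intro t ht
  subst hA hB
  simp_rw [oscillator_integrand_eq, of_intervalIntegral_oscillator_integrand]
  have hσt : 0 < (σ * t) ^ 4 := by positivity
  exact posDef_fin_two_of_pos_of_sq_lt (by positivity) (by nlinarith)
end
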